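/- arXiv:math/0612150 — 2 statements merged into one kernel-verified Lean document; each statement's English description precedes it below -/
import Mathlib

section
/- Let F : D → D' be a C¹ map between connected open subsets of ℝ^{2n} equipped with continuous almost complex structures J, J' respectively, satisfying dF ∘ J = J' ∘ dF. Then the sign of the Jacobian determinant of F is the same at every point where it is nonzero: either Jac F ≥ 0 everywhere or Jac F ≤ 0 everywhere. -/
open ContinuousLinearMap

section AuxLemmas

open Matrix Complex Module

set_option maxHeartbeats 1000000 in
theorem aux_realify_det_nonneg {ι : Type*} [Fintype ι] [DecidableEq ι] (M : Matrix ι ι ℂ) :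
    0 ≤ (Matrix.of fun p q : Fin 2 × ι =>
      ![(Complex.basisOneI q.1 * M p.2 q.2).re, (Complex.basisOneI q.1 * M p.2 q.2).im] p.1).det := by
  classical
  set Φr : Matrix (Fin 2 × ι) (Fin 2 × ι) ℝ := Matrix.of fun p q : Fin 2 × ι =>
      ![(Complex.basisOneI q.1 * M p.2 q.2).re, (Complex.basisOneI q.1 * M p.2 q.2).im] p.1 with hΦr
  set Φ : Matrix (Fin 2 × ι) (Fin 2 × ι) ℂ := Φr.map Complex.ofRealHom with hΦ
  set u : Matrix (Fin 2) (Fin 2) ℂ := !![1, I; 1, -I] with hu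
  set U : Matrix (Fin 2 × ι) (Fin 2 × ι) ℂ := Matrix.kroneckerMap (· * ·) u (1 : Matrix ι ι ℂ) with hU
  set Dm : Matrix (Fin 2 × ι) (Fin 2 × ι) ℂ := Matrix.of fun p q : Fin 2 × ι =>
      if p.1 = q.1 then (if p.1 = 0 then M p.2 q.2 else (starRingEnd ℂ) (M p.2 q.2)) else 0 with hDm
  have key : U * Φ = Dm * U := by
    ext ⟨i, k⟩ ⟨j, l⟩
    rw [Matrix.mul_apply, Matrix.mul_apply]
    rw [Fintype.sum_prod_type, Fintype.sum_prod_type]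
    simp only [hU, hΦ, hΦr, hDm, Matrix.kroneckerMap_apply, Matrix.one_apply, Matrix.map_apply,
      Matrix.of_apply, mul_ite, mul_one, mul_zero, ite_mul, zero_mul, one_mul,
      Finset.sum_ite_eq, Finset.sum_ite_eq', Finset.mem_univ, if_true]
    fin_cases i <;> fin_cases j <;>
      · simp [hu, Complex.coe_basisOneI]
        apply Complex.ext <;> simp
  have hdetU : U.det ≠ 0 := by
    rw [hU, Matrix.det_kronecker]
    have hdu : u.det = -(2 * I) := by
      rw [hu, Matrix.det_fin_two_of]; ring
    simp [hdu, I_ne_zero, pow_ne_zero, two_ne_zero]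
  have hdetΦ : Φ.det = Dm.det := by
    have h := congrArg Matrix.det key
    rw [Matrix.det_mul, Matrix.det_mul, mul_comm] at h
    exact mul_right_cancel₀ hdetU h
  have hDmdet : Dm.det = M.det * (starRingEnd ℂ) M.det := by
    have hsub : Dm = (Matrix.blockDiagonal (fun i : Fin 2 =>
        if i = 0 then M else M.map (starRingEnd ℂ))).submatrix
        (Equiv.prodComm (Fin 2) ι) (Equiv.prodComm (Fin 2) ι) := by
      ext ⟨i, k⟩ ⟨j, l⟩
      simp only [hDm, Matrix.submatrix_apply, Equiv.prodComm_apply, Prod.swap_prod_mk,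
        Matrix.blockDiagonal_apply, Matrix.of_apply]
      by_cases h : i = j
      · subst h; by_cases h0 : i = 0 <;> simp [h0, Matrix.map_apply]
      · simp [h, Ne.symm h]
    rw [hsub, Matrix.det_submatrix_equiv_self, Matrix.det_blockDiagonal, Fin.prod_univ_two]
    have : (M.map (starRingEnd ℂ)).det = (starRingEnd ℂ) M.det := by
      rw [RingHom.map_det]; rfl
    simp [this]
  have hfin : (Φr.det : ℂ) = ((Complex.normSq M.det : ℝ) : ℂ) := by
    have h1 : (Φr.det : ℂ) = Φ.det := RingHom.map_det Complex.ofRealHom Φr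
    rw [h1, hdetΦ, hDmdet, Complex.mul_conj]
  have := Complex.ofReal_injective hfin
  rw [this]
  exact Complex.normSq_nonneg _

theorem aux_det_nonneg_of_commute {V : Type} [AddCommGroup V] [Module ℝ V]
    [FiniteDimensional ℝ V] (Jm : Module.End ℝ V) (hJm : Jm * Jm = -1)
    (R : V →ₗ[ℝ] V) (hR : R ∘ₗ Jm = Jm ∘ₗ R) : 0 ≤ LinearMap.det R := by
  classical
  set φ : ℂ →ₐ[ℝ] Module.End ℝ V := Complex.liftAux Jm hJm with hφ
  letI : Module ℂ V := Module.compHom V φ.toRingHom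
  have hsmul : ∀ (c : ℂ) (v : V), c • v = φ c v := fun c v => rfl
  letI : IsScalarTower ℝ ℂ V := ⟨fun r c v => by
    rw [hsmul, hsmul]
    have h2 : φ (r • c) = r • φ c := map_smul φ r c
    rw [h2, LinearMap.smul_apply]⟩
  haveI : FiniteDimensional ℂ V := Module.Finite.of_restrictScalars_finite ℝ ℂ V
  have hRJ : ∀ v, R (Jm v) = Jm (R v) := fun v => by
    simpa using LinearMap.congr_fun hR v
  have hcsm : ∀ (c : ℂ) (v : V), R (c • v) = c • R v := by
    intro c v
    rw [hsmul, hsmul, hφ, Complex.liftAux_apply]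
    simp only [LinearMap.add_apply, Module.algebraMap_end_apply, LinearMap.smul_apply]
    rw [map_add, R.map_smul, R.map_smul, hRJ]
  set Rc : V →ₗ[ℂ] V :=
    { toFun := ⇑R, map_add' := R.map_add, map_smul' := fun c v => hcsm c v } with hRc
  set b : Basis (Fin (finrank ℂ V)) ℂ V := Module.finBasis ℂ V with hb
  set b' : Basis (Fin 2 × Fin (finrank ℂ V)) ℝ V := Complex.basisOneI.smulTower b with hb'
  rw [← LinearMap.det_toMatrix b' R]
  set M : Matrix (Fin (finrank ℂ V)) (Fin (finrank ℂ V)) ℂ := LinearMap.toMatrix b b Rc with hM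
  have hmat : LinearMap.toMatrix b' b' R = Matrix.of fun p q : Fin 2 × Fin (finrank ℂ V) =>
      ![(Complex.basisOneI q.1 * M p.2 q.2).re, (Complex.basisOneI q.1 * M p.2 q.2).im] p.1 := by
    ext ⟨i, k⟩ ⟨j, l⟩
    rw [LinearMap.toMatrix_apply, Matrix.of_apply]
    rw [hb', Basis.smulTower_apply, Basis.smulTower_repr]
    rw [hcsm (Complex.basisOneI j) (b l)]
    have h4 : b.repr (Complex.basisOneI j • R (b l))
        = Complex.basisOneI j • b.repr (Rc (b l)) := _root_.map_smul b.repr _ _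
    rw [h4]
    have h3 : (Complex.basisOneI j • b.repr (Rc (b l))) k
        = Complex.basisOneI j * M k l := by
      rw [Finsupp.smul_apply, smul_eq_mul, hM, LinearMap.toMatrix_apply]
    rw [h3, Complex.coe_basisOneI_repr]
  rw [hmat]
  exact aux_realify_det_nonneg M

theorem aux_det_mul_det_nonneg {V : Type} [AddCommGroup V] [Module ℝ V]
    [FiniteDimensional ℝ V] (A B T S : V →ₗ[ℝ] V)
    (hB : B * B = -1)
    (hT : T ∘ₗ A = B ∘ₗ T) (hS : S ∘ₗ A = B ∘ₗ S) :
    0 ≤ LinearMap.det T * LinearMap.det S := by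
  by_cases hdS : LinearMap.det S = 0
  · simp [hdS]
  · set e : V ≃ₗ[ℝ] V := LinearMap.equivOfDetNeZero S hdS with he
    have heS : (e : V →ₗ[ℝ] V) = S := rfl
    have hinv : ∀ v, e.symm (S v) = v := fun v => by
      rw [← heS]; exact e.symm_apply_apply v
    have hinv' : ∀ v, S (e.symm v) = v := fun v => by
      rw [← heS]; exact e.apply_symm_apply v
    -- S⁻¹ ∘ B = A ∘ S⁻¹
    have hSinvB : ∀ v, e.symm (B v) = A (e.symm v) := by
      intro v
      have h1 : S (A (e.symm v)) = B v := by
        have := LinearMap.congr_fun hS (e.symm v)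
        simp only [LinearMap.comp_apply] at this
        rw [this, hinv']
      rw [← h1, hinv]
    set R : V →ₗ[ℝ] V := T ∘ₗ (e.symm : V →ₗ[ℝ] V) with hR
    have hcomm : R ∘ₗ B = B ∘ₗ R := by
      ext v
      have h4 := LinearMap.congr_fun hT (e.symm v)
      simp only [LinearMap.comp_apply, LinearEquiv.coe_coe, hR] at h4 ⊢
      rw [hSinvB, h4]
    have hdetR : 0 ≤ LinearMap.det R := by
      exact aux_det_nonneg_of_commute B hB R hcomm
    have hTRS : T = R ∘ₗ S := by
      ext v
      simp only [LinearMap.comp_apply, hR, LinearEquiv.coe_coe]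
      rw [hinv]
    have : LinearMap.det T * LinearMap.det S
        = LinearMap.det R * (LinearMap.det S) ^ 2 := by
      rw [hTRS, LinearMap.det_comp]; ring
    rw [this]
    exact mul_nonneg hdetR (sq_nonneg _)

theorem aux_exists_intertwiner {V W : Type} [AddCommGroup V] [Module ℝ V]
    [FiniteDimensional ℝ V] [AddCommGroup W] [Module ℝ W] [FiniteDimensional ℝ W]
    (hdim : finrank ℝ V = finrank ℝ W)
    (A : Module.End ℝ V) (hA : A * A = -1) (B : Module.End ℝ W) (hB : B * B = -1) :
    ∃ T : V ≃ₗ[ℝ] W, (T : V →ₗ[ℝ] W) ∘ₗ A = B ∘ₗ (T : V →ₗ[ℝ] W) := by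
  classical
  set φ : ℂ →ₐ[ℝ] Module.End ℝ V := Complex.liftAux A hA with hφ
  set ψ : ℂ →ₐ[ℝ] Module.End ℝ W := Complex.liftAux B hB with hψ
  letI : Module ℂ V := Module.compHom V φ.toRingHom
  letI : Module ℂ W := Module.compHom W ψ.toRingHom
  have hsmulV : ∀ (c : ℂ) (v : V), c • v = φ c v := fun c v => rfl
  have hsmulW : ∀ (c : ℂ) (w : W), c • w = ψ c w := fun c w => rfl
  letI : IsScalarTower ℝ ℂ V := ⟨fun r c v => by
    rw [hsmulV, hsmulV]
    have h2 : φ (r • c) = r • φ c := map_smul φ r c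
    rw [h2, LinearMap.smul_apply]⟩
  letI : IsScalarTower ℝ ℂ W := ⟨fun r c w => by
    rw [hsmulW, hsmulW]
    have h2 : ψ (r • c) = r • ψ c := map_smul ψ r c
    rw [h2, LinearMap.smul_apply]⟩
  haveI : FiniteDimensional ℂ V := Module.Finite.of_restrictScalars_finite ℝ ℂ V
  haveI : FiniteDimensional ℂ W := Module.Finite.of_restrictScalars_finite ℝ ℂ W
  have hrank : finrank ℂ V = finrank ℂ W := by
    have h1 : finrank ℝ ℂ * finrank ℂ V = finrank ℝ V := Module.finrank_mul_finrank ℝ ℂ V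
    have h2 : finrank ℝ ℂ * finrank ℂ W = finrank ℝ W := Module.finrank_mul_finrank ℝ ℂ W
    rw [Complex.finrank_real_complex] at h1 h2
    omega
  obtain ⟨g⟩ := FiniteDimensional.nonempty_linearEquiv_of_finrank_eq hrank
  refine ⟨g.restrictScalars ℝ, ?_⟩
  ext v
  simp only [LinearMap.comp_apply, LinearEquiv.coe_coe, LinearEquiv.restrictScalars_apply]
  have h1 : A v = Complex.I • v := by
    rw [hsmulV, hφ, Complex.liftAux_apply_I]
  have h2 : (Complex.I : ℂ) • g v = B (g v) := by
    rw [hsmulW, hψ, Complex.liftAux_apply_I]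
  rw [h1, _root_.map_smul, h2]

end AuxLemmas

set_option maxHeartbeats 1000000 in
/-- A `C¹` pseudo-holomorphic map between equidimensional almost complex open subsets of
`ℝ^{2n}` either preserves or reverses orientation: the sign of its Jacobian determinant
is globally constant. -/
theorem stmt_3 (n : ℕ)
    (D D' : Set (Fin (2 * n) → ℝ)) (hD : IsOpen D) (hDconn : IsConnected D)
    (hD' : IsOpen D') (hD'conn : IsConnected D')
    (F : (Fin (2 * n) → ℝ) → (Fin (2 * n) → ℝ))
    (hF : ContDiffOn ℝ 1 F D) (hmaps : Set.MapsTo F D D')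
    (J J' : (Fin (2 * n) → ℝ) → (Fin (2 * n) → ℝ) →L[ℝ] (Fin (2 * n) → ℝ))
    (hJcont : ContinuousOn J D) (hJ'cont : ContinuousOn J' D')
    (hJ : ∀ p ∈ D, (J p).comp (J p) = -ContinuousLinearMap.id ℝ _)
    (hJ' : ∀ q ∈ D', (J' q).comp (J' q) = -ContinuousLinearMap.id ℝ _)
    (hholo : ∀ p ∈ D, (fderiv ℝ F p).comp (J p) = (J' (F p)).comp (fderiv ℝ F p)) :
    (∀ p ∈ D, 0 ≤ LinearMap.det (fderiv ℝ F p : (Fin (2 * n) → ℝ) →ₗ[ℝ] (Fin (2 * n) → ℝ))) ∨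
    (∀ p ∈ D, LinearMap.det (fderiv ℝ F p : (Fin (2 * n) → ℝ) →ₗ[ℝ] (Fin (2 * n) → ℝ)) ≤ 0) := by
  classical
  -- pointwise square facts at linear-map level
  have hsq : ∀ p ∈ D, ((J p : (Fin (2 * n) → ℝ) →ₗ[ℝ] (Fin (2 * n) → ℝ)) ∘ₗ (J p : (Fin (2 * n) → ℝ) →ₗ[ℝ] (Fin (2 * n) → ℝ))) = -LinearMap.id := by
    intro p hp
    refine LinearMap.ext fun v => ?_
    have h2 : (J p) ((J p) v) = -v := by
      rw [← ContinuousLinearMap.comp_apply, hJ p hp]; rfl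
    simpa using h2
  have hsq' : ∀ q ∈ D', ((J' q : (Fin (2 * n) → ℝ) →ₗ[ℝ] (Fin (2 * n) → ℝ)) ∘ₗ (J' q : (Fin (2 * n) → ℝ) →ₗ[ℝ] (Fin (2 * n) → ℝ))) = -LinearMap.id := by
    intro q hq
    refine LinearMap.ext fun v => ?_
    have h2 : (J' q) ((J' q) v) = -v := by
      rw [← ContinuousLinearMap.comp_apply, hJ' q hq]; rfl
    simpa using h2
  -- continuity of the determinant on continuous linear maps
  have hdetC : Continuous (fun T : (Fin (2 * n) → ℝ) →L[ℝ] (Fin (2 * n) → ℝ) => LinearMap.det (T : (Fin (2 * n) → ℝ) →ₗ[ℝ] (Fin (2 * n) → ℝ))) := by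
    have hmat : Continuous (fun T : (Fin (2 * n) → ℝ) →L[ℝ] (Fin (2 * n) → ℝ) =>
        LinearMap.toMatrix' (T : (Fin (2 * n) → ℝ) →ₗ[ℝ] (Fin (2 * n) → ℝ))) := by
      apply continuous_matrix
      intro i j
      have : (fun T : (Fin (2 * n) → ℝ) →L[ℝ] (Fin (2 * n) → ℝ) => LinearMap.toMatrix' (T : (Fin (2 * n) → ℝ) →ₗ[ℝ] (Fin (2 * n) → ℝ)) i j)
          = fun T : (Fin (2 * n) → ℝ) →L[ℝ] (Fin (2 * n) → ℝ) => T (fun j' => if j' = j then 1 else 0) i := by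
        funext T
        rw [LinearMap.toMatrix'_apply]
        rw [show (Pi.single j 1 : Fin (2 * n) → ℝ) = fun j' => if j' = j then 1 else 0 from
          funext fun j' => Pi.single_apply j 1 j']
        rfl
      rw [this]
      exact (continuous_apply i).comp (ContinuousLinearMap.apply ℝ (Fin (2 * n) → ℝ) _).continuous
    have := hmat.matrix_det
    simpa using this
  have hFD : ContinuousOn F D := hF.continuousOn
  -- the key local lemma
  have main : ∀ p ∈ D, ∀ S : (Fin (2 * n) → ℝ) →ₗ[ℝ] (Fin (2 * n) → ℝ),
      S ∘ₗ (J p : (Fin (2 * n) → ℝ) →ₗ[ℝ] (Fin (2 * n) → ℝ)) = (J' (F p) : (Fin (2 * n) → ℝ) →ₗ[ℝ] (Fin (2 * n) → ℝ)) ∘ₗ S →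
      ∃ O : Set (Fin (2 * n) → ℝ), IsOpen O ∧ p ∈ O ∧ O ⊆ D ∧ ∀ q ∈ O, ∃ S' : (Fin (2 * n) → ℝ) →ₗ[ℝ] (Fin (2 * n) → ℝ),
        (S' ∘ₗ (J q : (Fin (2 * n) → ℝ) →ₗ[ℝ] (Fin (2 * n) → ℝ)) = (J' (F q) : (Fin (2 * n) → ℝ) →ₗ[ℝ] (Fin (2 * n) → ℝ)) ∘ₗ S') ∧
        ∃ x y : ℝ, 0 < x ∧ 0 < y ∧ LinearMap.det S' = x * LinearMap.det S * y := by
    intro p hp S hS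
    set fK : (Fin (2 * n) → ℝ) → ℝ := fun q =>
      LinearMap.det ((ContinuousLinearMap.id ℝ (Fin (2 * n) → ℝ) - (J p).comp (J q) : (Fin (2 * n) → ℝ) →L[ℝ] (Fin (2 * n) → ℝ)) : (Fin (2 * n) → ℝ) →ₗ[ℝ] (Fin (2 * n) → ℝ))
      with hfK
    set fN : (Fin (2 * n) → ℝ) → ℝ := fun q =>
      LinearMap.det ((ContinuousLinearMap.id ℝ (Fin (2 * n) → ℝ) - (J' (F q)).comp (J' (F p)) : (Fin (2 * n) → ℝ) →L[ℝ] (Fin (2 * n) → ℝ)) :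
        (Fin (2 * n) → ℝ) →ₗ[ℝ] (Fin (2 * n) → ℝ)) with hfN
    have hKc : ContinuousOn fK D := by
      apply hdetC.comp_continuousOn
      exact continuousOn_const.sub
        ((ContinuousLinearMap.compL ℝ (Fin (2 * n) → ℝ) (Fin (2 * n) → ℝ) (Fin (2 * n) → ℝ) (J p)).continuous.comp_continuousOn hJcont)
    have hNc : ContinuousOn fN D := by
      apply hdetC.comp_continuousOn
      exact continuousOn_const.sub
        (((ContinuousLinearMap.compL ℝ (Fin (2 * n) → ℝ) (Fin (2 * n) → ℝ) (Fin (2 * n) → ℝ)).flip (J' (F p))).continuous.comp_continuousOn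
          (hJ'cont.comp hFD hmaps))
    have hdouble : ∀ A : (Fin (2 * n) → ℝ) →L[ℝ] (Fin (2 * n) → ℝ), A.comp A = -ContinuousLinearMap.id ℝ (Fin (2 * n) → ℝ) →
        LinearMap.det ((ContinuousLinearMap.id ℝ (Fin (2 * n) → ℝ) - A.comp A : (Fin (2 * n) → ℝ) →L[ℝ] (Fin (2 * n) → ℝ)) : (Fin (2 * n) → ℝ) →ₗ[ℝ] (Fin (2 * n) → ℝ))
          = 2 ^ (2 * n) := by
      intro A hA
      have h1 : (ContinuousLinearMap.id ℝ (Fin (2 * n) → ℝ) - A.comp A : (Fin (2 * n) → ℝ) →L[ℝ] (Fin (2 * n) → ℝ)) = (2 : ℝ) • ContinuousLinearMap.id ℝ (Fin (2 * n) → ℝ) := by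
        rw [hA]
        ext v
        simp [two_smul]
      rw [h1]
      have h2 : (((2 : ℝ) • ContinuousLinearMap.id ℝ (Fin (2 * n) → ℝ) : (Fin (2 * n) → ℝ) →L[ℝ] (Fin (2 * n) → ℝ)) : (Fin (2 * n) → ℝ) →ₗ[ℝ] (Fin (2 * n) → ℝ))
          = (2 : ℝ) • LinearMap.id := by
        ext v; simp
      rw [h2, LinearMap.det_smul]
      norm_num
    have hKp : fK p = 2 ^ (2 * n) := hdouble (J p) (hJ p hp)
    have hNp : fN p = 2 ^ (2 * n) := hdouble (J' (F p)) (hJ' (F p) (hmaps hp))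
    set O : Set (Fin (2 * n) → ℝ) := (D ∩ fK ⁻¹' Set.Ioi 0) ∩ (D ∩ fN ⁻¹' Set.Ioi 0) with hO
    have hOopen : IsOpen O :=
      (hKc.isOpen_inter_preimage hD isOpen_Ioi).inter (hNc.isOpen_inter_preimage hD isOpen_Ioi)
    have hpO : p ∈ O := by
      constructor <;> constructor <;>
        simp_all [hKp, hNp, Set.mem_preimage, pow_pos (by norm_num : (0:ℝ) < 2)]
    refine ⟨O, hOopen, hpO, fun q hq => hq.1.1, ?_⟩
    rintro q ⟨⟨hqD, hqK⟩, ⟨-, hqN⟩⟩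
    set a : (Fin (2 * n) → ℝ) →ₗ[ℝ] (Fin (2 * n) → ℝ) := (J q : (Fin (2 * n) → ℝ) →ₗ[ℝ] (Fin (2 * n) → ℝ))
    set a0 : (Fin (2 * n) → ℝ) →ₗ[ℝ] (Fin (2 * n) → ℝ) := (J p : (Fin (2 * n) → ℝ) →ₗ[ℝ] (Fin (2 * n) → ℝ))
    set b : (Fin (2 * n) → ℝ) →ₗ[ℝ] (Fin (2 * n) → ℝ) := (J' (F q) : (Fin (2 * n) → ℝ) →ₗ[ℝ] (Fin (2 * n) → ℝ))
    set b0 : (Fin (2 * n) → ℝ) →ₗ[ℝ] (Fin (2 * n) → ℝ) := (J' (F p) : (Fin (2 * n) → ℝ) →ₗ[ℝ] (Fin (2 * n) → ℝ))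
    set Kl : (Fin (2 * n) → ℝ) →ₗ[ℝ] (Fin (2 * n) → ℝ) := LinearMap.id - a0 ∘ₗ a with hKl
    set Nl : (Fin (2 * n) → ℝ) →ₗ[ℝ] (Fin (2 * n) → ℝ) := LinearMap.id - b ∘ₗ b0 with hNl
    have haa : ∀ v, a (a v) = -v := fun v => by
      have := LinearMap.congr_fun (hsq q hqD) v; simpa [a] using this
    have ha0 : ∀ v, a0 (a0 v) = -v := fun v => by
      have := LinearMap.congr_fun (hsq p hp) v; simpa [a0] using this
    have hbb : ∀ v, b (b v) = -v := fun v => by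
      have := LinearMap.congr_fun (hsq' (F q) (hmaps hqD)) v; simpa [b] using this
    have hb0 : ∀ v, b0 (b0 v) = -v := fun v => by
      have := LinearMap.congr_fun (hsq' (F p) (hmaps hp)) v; simpa [b0] using this
    have hSv : ∀ v, S (a0 v) = b0 (S v) := fun v => by
      have := LinearMap.congr_fun hS v; simpa using this
    have hKa : ∀ v, Kl (a v) = a0 (Kl v) := by
      intro v
      simp only [hKl, LinearMap.sub_apply, LinearMap.id_apply, LinearMap.comp_apply,
        map_sub, haa, ha0]
      simp [map_neg]
      abel
    have hNb : ∀ v, Nl (b0 v) = b (Nl v) := by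
      intro v
      simp only [hNl, LinearMap.sub_apply, LinearMap.id_apply, LinearMap.comp_apply,
        map_sub, hbb, hb0]
      simp [map_neg]
      abel
    refine ⟨Nl ∘ₗ S ∘ₗ Kl, ?_, fN q, fK q, hqN, hqK, ?_⟩
    · ext v
      simp only [LinearMap.comp_apply]
      rw [hKa, hSv, hNb]
    · have hKco : ((ContinuousLinearMap.id ℝ (Fin (2 * n) → ℝ) - (J p).comp (J q) : (Fin (2 * n) → ℝ) →L[ℝ] (Fin (2 * n) → ℝ)) : (Fin (2 * n) → ℝ) →ₗ[ℝ] (Fin (2 * n) → ℝ))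
          = Kl := by ext v; simp [hKl]; rfl
      have hNco : ((ContinuousLinearMap.id ℝ (Fin (2 * n) → ℝ) - (J' (F q)).comp (J' (F p)) : (Fin (2 * n) → ℝ) →L[ℝ] (Fin (2 * n) → ℝ)) :
          (Fin (2 * n) → ℝ) →ₗ[ℝ] (Fin (2 * n) → ℝ)) = Nl := by ext v; simp [hNl]; rfl
      have e1 : fN q = LinearMap.det Nl := by simp only [hfN]; rw [hNco]
      have e2 : fK q = LinearMap.det Kl := by simp only [hfK]; rw [hKco]
      rw [LinearMap.det_comp, LinearMap.det_comp, e1, e2]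
      ring
  -- the two sign sets
  set PosS : Set (Fin (2 * n) → ℝ) := {p | p ∈ D ∧ ∃ S : (Fin (2 * n) → ℝ) →ₗ[ℝ] (Fin (2 * n) → ℝ),
    S ∘ₗ (J p : (Fin (2 * n) → ℝ) →ₗ[ℝ] (Fin (2 * n) → ℝ)) = (J' (F p) : (Fin (2 * n) → ℝ) →ₗ[ℝ] (Fin (2 * n) → ℝ)) ∘ₗ S ∧ 0 < LinearMap.det S} with hPosS
  set NegS : Set (Fin (2 * n) → ℝ) := {p | p ∈ D ∧ ∃ S : (Fin (2 * n) → ℝ) →ₗ[ℝ] (Fin (2 * n) → ℝ),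
    S ∘ₗ (J p : (Fin (2 * n) → ℝ) →ₗ[ℝ] (Fin (2 * n) → ℝ)) = (J' (F p) : (Fin (2 * n) → ℝ) →ₗ[ℝ] (Fin (2 * n) → ℝ)) ∘ₗ S ∧ LinearMap.det S < 0} with hNegS
  have hPosOpen : IsOpen PosS := by
    rw [isOpen_iff_forall_mem_open]
    rintro p ⟨hp, S, hS, hSdet⟩
    obtain ⟨O, hOopen, hpO, hOD, hOkey⟩ := main p hp S hS
    refine ⟨O, ?_, hOopen, hpO⟩
    intro q hqO
    obtain ⟨S', hS', x, y, hx, hy, hdet⟩ := hOkey q hqO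
    exact ⟨hOD hqO, S', hS', by rw [hdet]; positivity⟩
  have hNegOpen : IsOpen NegS := by
    rw [isOpen_iff_forall_mem_open]
    rintro p ⟨hp, S, hS, hSdet⟩
    obtain ⟨O, hOopen, hpO, hOD, hOkey⟩ := main p hp S hS
    refine ⟨O, ?_, hOopen, hpO⟩
    intro q hqO
    obtain ⟨S', hS', x, y, hx, hy, hdet⟩ := hOkey q hqO
    refine ⟨hOD hqO, S', hS', ?_⟩
    rw [hdet]
    have : x * LinearMap.det S < 0 := mul_neg_of_pos_of_neg hx hSdet
    exact mul_neg_of_neg_of_pos this hy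
  have hdisj : Disjoint PosS NegS := by
    rw [Set.disjoint_left]
    rintro p ⟨hp, S₁, hS₁, hd₁⟩ ⟨-, S₂, hS₂, hd₂⟩
    have h0 := aux_det_mul_det_nonneg (J p : (Fin (2 * n) → ℝ) →ₗ[ℝ] (Fin (2 * n) → ℝ)) (J' (F p) : (Fin (2 * n) → ℝ) →ₗ[ℝ] (Fin (2 * n) → ℝ)) S₁ S₂
      (by exact hsq' (F p) (hmaps hp)) hS₁ hS₂
    nlinarith
  have hcover : D ⊆ PosS ∪ NegS := by
    intro p hp
    obtain ⟨T, hT⟩ := aux_exists_intertwiner (rfl : Module.finrank ℝ (Fin (2 * n) → ℝ) = Module.finrank ℝ (Fin (2 * n) → ℝ))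
      ((J p : (Fin (2 * n) → ℝ) →ₗ[ℝ] (Fin (2 * n) → ℝ))) (by exact hsq p hp) ((J' (F p) : (Fin (2 * n) → ℝ) →ₗ[ℝ] (Fin (2 * n) → ℝ)))
      (by exact hsq' (F p) (hmaps hp))
    have hTdet : LinearMap.det (T : (Fin (2 * n) → ℝ) →ₗ[ℝ] (Fin (2 * n) → ℝ)) ≠ 0 := (LinearEquiv.isUnit_det' T).ne_zero
    rcases hTdet.lt_or_gt with h | h
    · exact Or.inr ⟨hp, T, hT, h⟩
    · exact Or.inl ⟨hp, T, hT, h⟩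
  rcases hDconn.isPreconnected.subset_or_subset hPosOpen hNegOpen hdisj hcover with h | h
  · left
    intro p hp
    obtain ⟨-, S, hS, hSdet⟩ := h hp
    have hTl : ((fderiv ℝ F p : (Fin (2 * n) → ℝ) →L[ℝ] (Fin (2 * n) → ℝ)) : (Fin (2 * n) → ℝ) →ₗ[ℝ] (Fin (2 * n) → ℝ)) ∘ₗ (J p : (Fin (2 * n) → ℝ) →ₗ[ℝ] (Fin (2 * n) → ℝ))
        = (J' (F p) : (Fin (2 * n) → ℝ) →ₗ[ℝ] (Fin (2 * n) → ℝ)) ∘ₗ ((fderiv ℝ F p : (Fin (2 * n) → ℝ) →L[ℝ] (Fin (2 * n) → ℝ)) : (Fin (2 * n) → ℝ) →ₗ[ℝ] (Fin (2 * n) → ℝ)) := by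
      refine LinearMap.ext fun v => ?_
      have := ContinuousLinearMap.ext_iff.mp (hholo p hp) v
      simpa using this
    have h0 := aux_det_mul_det_nonneg (J p : (Fin (2 * n) → ℝ) →ₗ[ℝ] (Fin (2 * n) → ℝ)) (J' (F p) : (Fin (2 * n) → ℝ) →ₗ[ℝ] (Fin (2 * n) → ℝ))
      ((fderiv ℝ F p : (Fin (2 * n) → ℝ) →L[ℝ] (Fin (2 * n) → ℝ)) : (Fin (2 * n) → ℝ) →ₗ[ℝ] (Fin (2 * n) → ℝ)) S
      (by exact hsq' (F p) (hmaps hp)) hTl hS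
    nlinarith
  · right
    intro p hp
    obtain ⟨-, S, hS, hSdet⟩ := h hp
    have hTl : ((fderiv ℝ F p : (Fin (2 * n) → ℝ) →L[ℝ] (Fin (2 * n) → ℝ)) : (Fin (2 * n) → ℝ) →ₗ[ℝ] (Fin (2 * n) → ℝ)) ∘ₗ (J p : (Fin (2 * n) → ℝ) →ₗ[ℝ] (Fin (2 * n) → ℝ))
        = (J' (F p) : (Fin (2 * n) → ℝ) →ₗ[ℝ] (Fin (2 * n) → ℝ)) ∘ₗ ((fderiv ℝ F p : (Fin (2 * n) → ℝ) →L[ℝ] (Fin (2 * n) → ℝ)) : (Fin (2 * n) → ℝ) →ₗ[ℝ] (Fin (2 * n) → ℝ)) := by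
      refine LinearMap.ext fun v => ?_
      have := ContinuousLinearMap.ext_iff.mp (hholo p hp) v
      simpa using this
    have h0 := aux_det_mul_det_nonneg (J p : (Fin (2 * n) → ℝ) →ₗ[ℝ] (Fin (2 * n) → ℝ)) (J' (F p) : (Fin (2 * n) → ℝ) →ₗ[ℝ] (Fin (2 * n) → ℝ))
      ((fderiv ℝ F p : (Fin (2 * n) → ℝ) →L[ℝ] (Fin (2 * n) → ℝ)) : (Fin (2 * n) → ℝ) →ₗ[ℝ] (Fin (2 * n) → ℝ)) S
      (by exact hsq' (F p) (hmaps hp)) hTl hS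
    nlinarith
end

section
/- Let A be an invertible (n+1)×(n+1) complex matrix (indexed from 0 to n) and d > 0, and suppose: |A_{0,0}| ≤ C, |A_{0,j}| ≤ C·d^{1/2} for j ≥ 1, |A_{i,0}| ≤ C·d^{-1/2} for i ≥ 1, |A_{i,j}| ≤ C for i,j ≥ 1, and |det A| ≥ δ > 0. Then the inverse matrix satisfies the same type of estimates: |(A^{-1})_{0,0}| ≤ C', |(A^{-1})_{0,j}| ≤ C'·d^{1/2}, |(A^{-1})_{i,0}| ≤ C'·d^{-1/2}, |(A^{-1})_{i,j}| ≤ C' for i,j ≥ 1, where C' depends only on C, δ, and n (not on d), provided d ≤ 1. -/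
open Matrix

lemma inv_entry_bound {m : ℕ} (M : Matrix (Fin (m + 1)) (Fin (m + 1)) ℂ) (K δ : ℝ)
    (hK : 1 ≤ K) (hδ : 0 < δ)
    (h : ∀ i j, ‖M i j‖ ≤ K) (hdet : δ ≤ ‖M.det‖) :
    ∀ i j, ‖M⁻¹ i j‖ ≤ (m + 1).factorial * K ^ (m + 1) / δ := by
  intro i j
  have hd0 : M.det ≠ 0 := by
    intro h0
    rw [h0, norm_zero] at hdet
    linarith
  have hadj : ‖M.adjugate i j‖ ≤ (m + 1).factorial * K ^ (m + 1) := by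
    rw [Matrix.adjugate_apply]
    have hb : ∀ a b, ‖(M.updateRow j (Pi.single i 1)) a b‖ ≤ K := by
      intro a b
      by_cases ha : a = j
      · subst ha
        rw [Matrix.updateRow_self]
        by_cases hb : b = i <;> simp [Pi.single_apply, hb] <;> linarith
      · rw [Matrix.updateRow_ne ha]; exact h a b
    have := Matrix.det_le (abv := IsAbsoluteValue.toAbsoluteValue (norm : ℂ → ℝ)) hb
    simpa [Fintype.card_fin, nsmul_eq_mul] using this
  rw [Matrix.inv_def, Ring.inverse_eq_inv']
  rw [Matrix.smul_apply, smul_eq_mul, norm_mul, norm_inv]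
  have h1 : (‖M.det‖)⁻¹ ≤ δ⁻¹ := inv_anti₀ hδ hdet
  calc (‖M.det‖)⁻¹ * ‖M.adjugate i j‖
      ≤ δ⁻¹ * ((m + 1).factorial * K ^ (m + 1)) := by
        apply mul_le_mul h1 hadj (norm_nonneg _) (by positivity)
    _ = (m + 1).factorial * K ^ (m + 1) / δ := by
        rw [div_eq_mul_inv, mul_comm]

/-- Anisotropic estimates for the inverse of a matrix: if an invertible complex
`(n+1)×(n+1)` matrix satisfies `|A₀₀| ≤ C`, `|A₀ⱼ| ≤ C√d`, `|Aᵢ₀| ≤ C/√d`, `|Aᵢⱼ| ≤ C`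
(for `i,j ≥ 1`) and `|det A| ≥ δ`, then `A⁻¹` satisfies estimates of the same type, with a
constant depending only on `C`, `δ` and `n`. -/
theorem stmt_15 (n : ℕ) (C δ : ℝ) (hC : 0 < C) (hδ : 0 < δ) :
    ∃ C' : ℝ, 0 < C' ∧
      ∀ (A : Matrix (Fin (n + 1)) (Fin (n + 1)) ℂ) (d : ℝ), 0 < d → d ≤ 1 →
        ‖A 0 0‖ ≤ C →
        (∀ j : Fin (n + 1), j ≠ 0 → ‖A 0 j‖ ≤ C * Real.sqrt d) →
        (∀ i : Fin (n + 1), i ≠ 0 → ‖A i 0‖ ≤ C / Real.sqrt d) →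
        (∀ i j : Fin (n + 1), i ≠ 0 → j ≠ 0 → ‖A i j‖ ≤ C) →
        δ ≤ ‖A.det‖ →
        ‖A⁻¹ 0 0‖ ≤ C' ∧
        (∀ j : Fin (n + 1), j ≠ 0 → ‖A⁻¹ 0 j‖ ≤ C' * Real.sqrt d) ∧
        (∀ i : Fin (n + 1), i ≠ 0 → ‖A⁻¹ i 0‖ ≤ C' / Real.sqrt d) ∧
        (∀ i j : Fin (n + 1), i ≠ 0 → j ≠ 0 → ‖A⁻¹ i j‖ ≤ C') := by
  set K : ℝ := max C 1 with hKdef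
  have hK1 : 1 ≤ K := le_max_right _ _
  have hCK : C ≤ K := le_max_left _ _
  refine ⟨(n + 1).factorial * K ^ (n + 1) / δ, by positivity, ?_⟩
  set C' : ℝ := (n + 1).factorial * K ^ (n + 1) / δ with hC'def
  intro A d hd hd1 h00 h0j hi0 hij hdet
  have hC'pos : 0 < C' := by positivity
  set s : ℝ := Real.sqrt d with hs
  have hs0 : 0 < s := Real.sqrt_pos.2 hd
  have hsne : (s : ℂ) ≠ 0 := by exact_mod_cast hs0.ne'
  have habs : ‖(s : ℂ)‖ = s := by
    rw [Complex.norm_real, Real.norm_eq_abs, abs_of_pos hs0]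
  set v : Fin (n + 1) → ℂ := fun i => if i = 0 then ((s : ℂ))⁻¹ else 1 with hv
  set w : Fin (n + 1) → ℂ := fun i => if i = 0 then (s : ℂ) else 1 with hw
  have hvw : ∀ i, v i * w i = 1 := by
    intro i
    by_cases hi : i = 0 <;> simp [hv, hw, hi, inv_mul_cancel₀ hsne]
  have hwv : ∀ i, w i * v i = 1 := by
    intro i; rw [mul_comm]; exact hvw i
  set B : Matrix (Fin (n + 1)) (Fin (n + 1)) ℂ :=
    Matrix.diagonal v * A * Matrix.diagonal w with hB
  have hBentry : ∀ i j, B i j = v i * A i j * w j := by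
    intro i j
    rw [hB, Matrix.mul_diagonal, Matrix.diagonal_mul]
  have hdetA : A.det ≠ 0 := by
    intro h0
    rw [h0, norm_zero] at hdet
    linarith
  have hdetB : B.det = A.det := by
    rw [hB, Matrix.det_mul, Matrix.det_mul, Matrix.det_diagonal, Matrix.det_diagonal]
    have hprod : (∏ i, v i) * (∏ i, w i) = 1 := by
      rw [← Finset.prod_mul_distrib]
      simp [hvw]
    calc (∏ i, v i) * A.det * ∏ i, w i = ((∏ i, v i) * ∏ i, w i) * A.det := by ring
      _ = A.det := by rw [hprod, one_mul]
  -- entries of B are bounded by K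
  have hBb : ∀ i j, ‖B i j‖ ≤ K := by
    intro i j
    rw [hBentry]
    by_cases hi : i = 0 <;> by_cases hj : j = 0
    · subst hi; subst hj
      have : v 0 * A 0 0 * w 0 = A 0 0 := by
        simp only [hv, hw, if_pos rfl]
        field_simp
      rw [this]
      exact h00.trans hCK
    · subst hi
      simp only [hv, hw, if_pos rfl, if_neg hj, mul_one]
      rw [norm_mul, norm_inv, habs]
      have h1 : ‖A 0 j‖ ≤ C * s := h0j j hj
      calc s⁻¹ * ‖A 0 j‖ ≤ s⁻¹ * (C * s) := by
            apply mul_le_mul_of_nonneg_left h1 (by positivity)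
        _ = C := by field_simp
        _ ≤ K := hCK
    · subst hj
      simp only [hv, hw, if_neg hi, if_pos rfl, one_mul]
      rw [norm_mul, habs]
      have h1 : ‖A i 0‖ ≤ C / s := hi0 i hi
      calc ‖A i 0‖ * s ≤ (C / s) * s := by
            apply mul_le_mul_of_nonneg_right h1 hs0.le
        _ = C := by field_simp
        _ ≤ K := hCK
    · simp only [hv, hw, if_neg hi, if_neg hj, one_mul, mul_one]
      exact (hij i j hi hj).trans hCK
  have hdetBb : δ ≤ ‖B.det‖ := by rw [hdetB]; exact hdet
  have hBinv := inv_entry_bound B K δ hK1 hδ hBb hdetBb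
  rw [← hC'def] at hBinv
  -- B⁻¹ = diagonal v * A⁻¹ * diagonal w
  have hwvmat : Matrix.diagonal w * Matrix.diagonal v = 1 := by
    rw [Matrix.diagonal_mul_diagonal]
    have : (fun i => w i * v i) = fun _ => (1 : ℂ) := funext hwv
    rw [this, Matrix.diagonal_one]
  have hvwmat : Matrix.diagonal v * Matrix.diagonal w = 1 := by
    rw [Matrix.diagonal_mul_diagonal]
    have : (fun i => v i * w i) = fun _ => (1 : ℂ) := funext hvw
    rw [this, Matrix.diagonal_one]
  have hAAinv : A * A⁻¹ = 1 := Matrix.mul_nonsing_inv A (isUnit_iff_ne_zero.2 hdetA)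
  have hBinvEq : B⁻¹ = Matrix.diagonal v * A⁻¹ * Matrix.diagonal w := by
    apply Matrix.inv_eq_right_inv
    rw [hB]
    calc Matrix.diagonal v * A * Matrix.diagonal w * (Matrix.diagonal v * A⁻¹ * Matrix.diagonal w)
        = Matrix.diagonal v * (A * ((Matrix.diagonal w * Matrix.diagonal v) * A⁻¹)) *
            Matrix.diagonal w := by
          simp only [Matrix.mul_assoc]
      _ = 1 := by
          rw [hwvmat, Matrix.one_mul, hAAinv, Matrix.mul_one, hvwmat]
  have hBinvEntry : ∀ i j, B⁻¹ i j = v i * A⁻¹ i j * w j := by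
    intro i j
    rw [hBinvEq, Matrix.mul_diagonal, Matrix.diagonal_mul]
  refine ⟨?_, ?_, ?_, ?_⟩
  · have he : B⁻¹ 0 0 = A⁻¹ 0 0 := by
      rw [hBinvEntry]
      simp only [hv, hw, if_pos rfl]
      field_simp
    rw [← he]
    exact hBinv 0 0
  · intro j hj
    have he : A⁻¹ 0 j = (s : ℂ) * B⁻¹ 0 j := by
      rw [hBinvEntry]
      simp only [hv, hw, if_pos rfl, if_neg hj, mul_one]
      field_simp
    rw [he, norm_mul, habs, mul_comm]
    apply mul_le_mul_of_nonneg_right (hBinv 0 j) hs0.le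
  · intro i hi
    have he : A⁻¹ i 0 = B⁻¹ i 0 * ((s : ℂ))⁻¹ := by
      rw [hBinvEntry]
      simp only [hv, hw, if_neg hi, if_pos rfl, one_mul]
      field_simp
    rw [he, norm_mul, norm_inv, habs, div_eq_mul_inv]
    apply mul_le_mul_of_nonneg_right (hBinv i 0) (by positivity)
  · intro i j hi hj
    have he : A⁻¹ i j = B⁻¹ i j := by
      rw [hBinvEntry]
      simp [hv, hw, if_neg hi, if_neg hj]
    rw [he]
    exact hBinv i j
end
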